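/- arXiv:2308.08189 — 2 statements merged into one kernel-verified Lean document; each statement's English description precedes it below -/
import Mathlib

section
/- Let n ≥ 1, x > 0, 0 ≤ m < n, and let v* ∈ ℝⁿ be any equidistant vector for mass mx, with Δ_y = ⌊(n+1)/(m+1)⌋. Then for every j with 1 ≤ j ≤ Δ_y: f_j(v*) = (n + 1 − j)·x − j·(m·x). -/
open Finset

/-- `f_j v = Σ_{l=1}^{n+1−j} (x − Σ_{i=0}^{j−1} v_{l+i})⁺`, the sum of positive parts of
the deficits of all length-`j` windows of consecutive coordinates (`l` is 0-indexed here). -/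
noncomputable def fj (n : ℕ) (x : ℝ) (j : ℕ) (v : Fin n → ℝ) : ℝ :=
  ∑ l ∈ Finset.range (n + 1 - j),
    max (x - ∑ i ∈ Finset.range j, if h : l + i < n then v ⟨l + i, h⟩ else 0) 0

/-- An equidistant vector for mass `m·x`: determined by positive integers `Δ_1,…,Δ_{m+1}`
with `Σ Δ_k = n+1` and `|Δ_{k₁} − Δ_{k₂}| ≤ 1`, with `v_i = x` exactly when the 1-based
index `i` is one of the partial sums `Σ_{k=1}^{j} Δ_k`, `1 ≤ j ≤ m`. -/
def IsEquidistant (n m : ℕ) (x : ℝ) (v : Fin n → ℝ) : Prop :=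
  ∃ Δ : ℕ → ℕ,
    (∀ k ∈ Finset.Icc 1 (m + 1), 0 < Δ k) ∧
    (∑ k ∈ Finset.Icc 1 (m + 1), Δ k = n + 1) ∧
    (∀ k₁ ∈ Finset.Icc 1 (m + 1), ∀ k₂ ∈ Finset.Icc 1 (m + 1), Δ k₁ ≤ Δ k₂ + 1) ∧
    (∀ i : Fin n,
      ((∃ j, 1 ≤ j ∧ j ≤ m ∧ (i : ℕ) + 1 = ∑ k ∈ Finset.Icc 1 j, Δ k) → v i = x) ∧
      (¬ (∃ j, 1 ≤ j ∧ j ≤ m ∧ (i : ℕ) + 1 = ∑ k ∈ Finset.Icc 1 j, Δ k) → v i = 0))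

/-!
Call the coordinates of `v*` equal to `x` its marks. Since every gap `Δ_k` is at least
`Δ_y ≥ j`, any two marks are at least `j` apart and every mark is at least `j` away from both
ends. Hence a window of `j` consecutive coordinates contains at most one mark, so its deficit
`x - Σ v` is nonnegative and the positive parts in `f_j` can be dropped; and each mark lies in
exactly `j` of the `n + 1 - j` windows, so double counting gives `Σ_l Σ_window v = j · m · x`.
-/

lemma sum_range_ite_add_mem (M : Finset ℕ) (x : ℝ) (l j : ℕ) :
    ∑ i ∈ range j, (if l + i ∈ M then x else 0) = #(Ico l (l + j) ∩ M) * x := by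
  rw [← nsmul_eq_mul, ← sum_const, ← sum_ite_mem, sum_Ico_eq_sum_range, Nat.add_sub_cancel_left]

section Windows

variable {M : Finset ℕ} {j : ℕ}

lemma card_Ico_inter_le_one (hsep : ∀ a ∈ M, ∀ b ∈ M, a < b → a + j ≤ b) (l : ℕ) :
    #(Ico l (l + j) ∩ M) ≤ 1 := by
  refine card_le_one.2 fun a ha b hb => ?_
  simp only [mem_inter, mem_Ico] at ha hb
  rcases lt_trichotomy a b with h | h | h
  · have := hsep a ha.2 b hb.2 h; omega
  · exact h
  · have := hsep b hb.2 a ha.2 h; omega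

lemma card_filter_range_mem_Ico (n : ℕ) {q : ℕ} (hq : j ≤ q + 1) (hqn : q + j ≤ n) :
    #{l ∈ range (n + 1 - j) | q ∈ Ico l (l + j)} = j := by
  have : {l ∈ range (n + 1 - j) | q ∈ Ico l (l + j)} = Ico (q + 1 - j) (q + 1) := by
    ext l
    simp only [mem_filter, mem_range, mem_Ico]
    omega
  rw [this, Nat.card_Ico]
  omega

lemma sum_card_Ico_inter (n : ℕ) (hM : ∀ q ∈ M, j ≤ q + 1 ∧ q + j ≤ n) :
    ∑ l ∈ range (n + 1 - j), #(Ico l (l + j) ∩ M) = #M * j := by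
  calc ∑ l ∈ range (n + 1 - j), #(Ico l (l + j) ∩ M)
      = ∑ q ∈ M, #{l ∈ range (n + 1 - j) | q ∈ Ico l (l + j)} := by
        simp only [inter_comm _ M, ← filter_mem_eq_inter, card_filter]
        exact sum_comm
    _ = #M * j := by
        rw [sum_congr rfl fun q hq => card_filter_range_mem_Ico n (hM q hq).1 (hM q hq).2,
          sum_const, smul_eq_mul]

theorem sum_max_sub_window_sum (n : ℕ) {x : ℝ} (hx : 0 ≤ x) {w : ℕ → ℝ}
    (hw : ∀ p, w p = if p ∈ M then x else 0)
    (hsep : ∀ a ∈ M, ∀ b ∈ M, a < b → a + j ≤ b) (hM : ∀ q ∈ M, j ≤ q + 1 ∧ q + j ≤ n) :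
    ∑ l ∈ range (n + 1 - j), max (x - ∑ i ∈ range j, w (l + i)) 0
      = (n + 1 - j : ℕ) * x - j * (#M * x) := by
  have hwindow (l : ℕ) : ∑ i ∈ range j, w (l + i) = #(Ico l (l + j) ∩ M) * x := by
    simp only [hw, sum_range_ite_add_mem]
  calc ∑ l ∈ range (n + 1 - j), max (x - ∑ i ∈ range j, w (l + i)) 0
      = ∑ l ∈ range (n + 1 - j), (x - #(Ico l (l + j) ∩ M) * x) := by
        refine sum_congr rfl fun l _ => ?_
        have : (#(Ico l (l + j) ∩ M) : ℝ) ≤ 1 := by exact_mod_cast card_Ico_inter_le_one hsep l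
        rw [hwindow, max_eq_left (by nlinarith)]
    _ = (n + 1 - j : ℕ) * x - j * (#M * x) := by
        rw [sum_sub_distrib, sum_const, card_range, nsmul_eq_mul, ← sum_mul,
          ← Nat.cast_sum, sum_card_Ico_inter n hM]
        push_cast
        ring

end Windows

lemma sum_div_card_le_of_le_add_one {ι : Type*} {s : Finset ι} {f : ι → ℕ} {k : ι} (hk : k ∈ s)
    (h : ∀ i ∈ s, f i ≤ f k + 1) : (∑ i ∈ s, f i) / #s ≤ f k := by
  have : ∑ i ∈ s, f i < (f k + 1) * #s :=
    calc ∑ i ∈ s, f i < ∑ _i ∈ s, (f k + 1) := sum_lt_sum h ⟨k, hk, Nat.lt_succ_self _⟩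
      _ = (f k + 1) * #s := by rw [sum_const, smul_eq_mul, mul_comm]
  exact Nat.lt_succ_iff.1 ((Nat.div_lt_iff_lt_mul (card_pos.2 ⟨k, hk⟩)).2 this)

section Marks

/-- The marks sit at the `1`-based positions `P t`, `1 ≤ t ≤ m`; they are stored `0`-based. -/
def marks (P : ℕ → ℕ) (m : ℕ) : Finset ℕ := (Icc 1 m).image fun t => P t - 1

variable {P : ℕ → ℕ} {j m : ℕ}

lemma mem_marks (hP : StrictMonoOn P (Set.Iic m)) {p : ℕ} :
    p ∈ marks P m ↔ ∃ t, 1 ≤ t ∧ t ≤ m ∧ p + 1 = P t := by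
  simp only [marks, mem_image, mem_Icc]
  constructor
  · rintro ⟨t, ht, rfl⟩
    have := hP (Set.mem_Iic.2 (Nat.zero_le m)) ht.2 ht.1
    exact ⟨t, ht.1, ht.2, by omega⟩
  · rintro ⟨t, h1, h2, he⟩
    exact ⟨t, ⟨h1, h2⟩, by omega⟩

lemma card_marks (hP : StrictMonoOn P (Set.Iic m)) : #(marks P m) = m := by
  rw [marks, card_image_of_injOn, Nat.card_Icc, Nat.add_sub_cancel]
  intro s hs t ht hst
  simp only [coe_Icc, Set.mem_Icc] at hs ht hst
  have h0s := hP (Set.mem_Iic.2 (Nat.zero_le m)) hs.2 hs.1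
  have h0t := hP (Set.mem_Iic.2 (Nat.zero_le m)) ht.2 ht.1
  exact hP.injOn hs.2 ht.2 (by omega)

lemma add_le_of_mem_marks (hP : StrictMonoOn P (Set.Iic m))
    (hgap : ∀ s t, s < t → t ≤ m → P s + j ≤ P t) {a b : ℕ} (ha : a ∈ marks P m)
    (hb : b ∈ marks P m) (hab : a < b) : a + j ≤ b := by
  obtain ⟨s, -, hs, has⟩ := (mem_marks hP).1 ha
  obtain ⟨t, -, ht, hbt⟩ := (mem_marks hP).1 hb
  have := hgap s t ((hP.lt_iff_lt hs ht).1 (by omega)) ht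
  omega

lemma bounds_of_mem_marks (hP : StrictMonoOn P (Set.Iic m))
    (hgap : ∀ s t, s < t → t ≤ m + 1 → P s + j ≤ P t) {q : ℕ} (hq : q ∈ marks P m) :
    P 0 + j ≤ q + 1 ∧ q + 1 + j ≤ P (m + 1) := by
  obtain ⟨t, ht1, htm, hqt⟩ := (mem_marks hP).1 hq
  have := hgap 0 t ht1 (by omega)
  have := hgap t (m + 1) (by omega) le_rfl
  omega

lemma dite_eq_ite_mem_marks {n : ℕ} {x : ℝ} {v : Fin n → ℝ}
    (hP : StrictMonoOn P (Set.Iic (m + 1))) (htop : P (m + 1) = n + 1)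
    (hv : ∀ i : Fin n,
      ((∃ j, 1 ≤ j ∧ j ≤ m ∧ (i : ℕ) + 1 = P j) → v i = x) ∧
      (¬ (∃ j, 1 ≤ j ∧ j ≤ m ∧ (i : ℕ) + 1 = P j) → v i = 0)) (p : ℕ) :
    (if h : p < n then v ⟨p, h⟩ else 0) = if p ∈ marks P m then x else 0 := by
  have hmem := mem_marks (p := p) (hP.mono (Set.Iic_subset_Iic.2 m.le_succ))
  split_ifs with hp hM hM
  · exact (hv ⟨p, hp⟩).1 (hmem.1 hM)
  · exact (hv ⟨p, hp⟩).2 (mt hmem.2 hM)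
  · obtain ⟨t, -, ht, hpt⟩ := hmem.1 hM
    have := hP (Set.mem_Iic.2 (m.le_succ.trans' ht)) (Set.mem_Iic.2 le_rfl) (Nat.lt_succ_of_le ht)
    omega
  · rfl

end Marks

section PartialSum

def partialSum (Δ : ℕ → ℕ) (t : ℕ) : ℕ := ∑ k ∈ Icc 1 t, Δ k

variable {Δ : ℕ → ℕ} {j m : ℕ}

lemma partialSum_zero (Δ : ℕ → ℕ) : partialSum Δ 0 = 0 := rfl

lemma partialSum_succ (Δ : ℕ → ℕ) (t : ℕ) :
    partialSum Δ (t + 1) = partialSum Δ t + Δ (t + 1) :=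
  sum_Icc_succ_top (by omega) Δ

lemma partialSum_mono : Monotone (partialSum Δ) :=
  fun _ _ h => sum_le_sum_of_subset (Icc_subset_Icc_right h)

lemma partialSum_add_le (hΔ : ∀ k ∈ Icc 1 m, j ≤ Δ k) {s t : ℕ} (hst : s < t) (ht : t ≤ m) :
    partialSum Δ s + j ≤ partialSum Δ t :=
  calc partialSum Δ s + j ≤ partialSum Δ (s + 1) := by
        rw [partialSum_succ]
        exact Nat.add_le_add_left (hΔ _ (mem_Icc.2 ⟨by omega, by omega⟩)) _
    _ ≤ partialSum Δ t := partialSum_mono hst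

lemma partialSum_strictMonoOn (hpos : ∀ k ∈ Icc 1 m, 0 < Δ k) :
    StrictMonoOn (partialSum Δ) (Set.Iic m) :=
  fun _ _ _ ht hst => partialSum_add_le hpos hst ht

end PartialSum

theorem statement4_general (n m : ℕ) (x : ℝ) (hx : 0 < x)
    (vstar : Fin n → ℝ) (hv : IsEquidistant n m x vstar)
    (j : ℕ) (hj2 : j ≤ (n + 1) / (m + 1)) :
    fj n x j vstar = ((n : ℝ) + 1 - j) * x - (j : ℝ) * ((m : ℝ) * x) := by
  obtain ⟨Δ, hpos, hsum, hbal, hval⟩ := hv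
  have hjΔ : ∀ k ∈ Icc 1 (m + 1), j ≤ Δ k := fun k hk => hj2.trans <| by
    simpa [hsum] using sum_div_card_le_of_le_add_one hk fun i hi => hbal i hi k hk
  have hP := partialSum_strictMonoOn hpos
  have hP' := hP.mono (Set.Iic_subset_Iic.2 m.le_succ)
  have hgap (s t : ℕ) (hst : s < t) (ht : t ≤ m + 1) : partialSum Δ s + j ≤ partialSum Δ t :=
    partialSum_add_le hjΔ hst ht
  have hM (q : ℕ) (hq : q ∈ marks (partialSum Δ) m) : j ≤ q + 1 ∧ q + j ≤ n := by
    have := bounds_of_mem_marks hP' hgap hq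
    rw [partialSum_zero, show partialSum Δ (m + 1) = n + 1 from hsum] at this
    omega
  rw [fj, sum_max_sub_window_sum n hx.le (dite_eq_ite_mem_marks hP hsum hval)
    (fun a ha b hb => add_le_of_mem_marks hP' (fun s t hst ht => hgap s t hst (by omega)) ha hb)
    hM, card_marks hP', Nat.cast_sub (hj2.trans (Nat.div_le_self _ _))]
  push_cast
  ring

/-- For an equidistant vector for mass `m·x` and `1 ≤ j ≤ Δ_y = ⌊(n+1)/(m+1)⌋`,
`f_j(v*) = (n+1−j)·x − j·(m·x)`. -/
theorem statement4 (n m : ℕ) (hn : 1 ≤ n) (hm : m < n) (x : ℝ) (hx : 0 < x)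
    (vstar : Fin n → ℝ) (hv : IsEquidistant n m x vstar)
    (j : ℕ) (hj1 : 1 ≤ j) (hj2 : j ≤ (n + 1) / (m + 1)) :
    fj n x j vstar = ((n : ℝ) + 1 - j) * x - (j : ℝ) * ((m : ℝ) * x) :=
  statement4_general n m x hx vstar hv j hj2
end

section
/- Let n ≥ 1, x > 0 and w ≥ 0 with ⌊w/x⌋ ≥ ⌊n/2⌋ and w ≤ n·x. Then the minimum of f over Λ(w) equals n·x − w; i.e., f(v) ≥ n·x − w for all v ∈ Λ(w), and there exists v ∈ Λ(w) with f(v) = n·x − w. -/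
open Finset

/-- `f v = Σ_{1 ≤ l ≤ k ≤ n} (x − Σ_{i=l}^{k} v_i)⁺` (0-indexed over `Fin n`). -/
noncomputable def f (n : ℕ) (x : ℝ) (v : Fin n → ℝ) : ℝ :=
  ∑ l : Fin n, ∑ k : Fin n,
    if l ≤ k then max (x - ∑ i ∈ Finset.Icc l k, v i) 0 else 0

/-- `Λ(w)`: nonnegative vectors with coordinate sum `w`. -/
def Lambda (n : ℕ) (w : ℝ) : Set (Fin n → ℝ) :=
  {v | (∀ i, 0 ≤ v i) ∧ ∑ i, v i = w}

/-!
Keeping only the diagonal terms `l = k` of `f` gives `f v ≥ Σ_l (x - v_l) = n·x - w` on `Λ(w)`.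
Equality holds as soon as every `v_l ≤ x` and every window `[l, k]` with `l < k` carries mass
at least `x`. The vector putting `x` on the `⌊n/2⌋` odd positions and spreading the remaining
`w - ⌊n/2⌋·x` evenly over the other `n - ⌊n/2⌋` positions does this: the hypotheses are exactly
what makes that remainder lie between `0` and `(n - ⌊n/2⌋)·x`, and every window of length at
least two contains an odd position.
-/

theorem Finset.sum_range_ite_odd {M : Type*} [AddCommMonoid M] (a b : M) :
    ∀ n : ℕ, ∑ i ∈ range n, (if Odd i then a else b) = (n / 2) • a + (n - n / 2) • b
  | 0 => by simp
  | 1 => by simp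
  | n + 2 => by
    have hodd : Odd (n + 1) ↔ ¬Odd n := by simp [Nat.odd_add_one]
    have hhalf : (n + 2) / 2 = n / 2 + 1 := by omega
    have hrest : n + 2 - (n / 2 + 1) = n - n / 2 + 1 := by omega
    rw [sum_range_succ, sum_range_succ, Finset.sum_range_ite_odd a b n, hhalf, hrest]
    by_cases h : Odd n
    · simp only [hodd, h, if_true, not_true_eq_false, if_false, add_smul, one_smul]
      abel
    · simp only [hodd, h, if_true, not_false_eq_true, if_false, add_smul, one_smul]
      abel

def alternating (n : ℕ) (x c : ℝ) (i : Fin n) : ℝ := if Odd (i : ℕ) then x else c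

section

variable {n : ℕ} {x : ℝ}

theorem sum_sub_le_f (v : Fin n → ℝ) : ∑ l, (x - v l) ≤ f n x v := by
  refine sum_le_sum fun l _ => ?_
  calc x - v l ≤ if l ≤ l then max (x - ∑ i ∈ Icc l l, v i) 0 else 0 := by simp
    _ ≤ _ := single_le_sum (f := fun k => if l ≤ k then max (x - ∑ i ∈ Icc l k, v i) 0 else 0)
        (fun k _ => by split_ifs <;> simp) (mem_univ l)

theorem f_eq_sum_sub (v : Fin n → ℝ) (hle : ∀ l, v l ≤ x)
    (hwindow : ∀ l k, l < k → x ≤ ∑ i ∈ Icc l k, v i) : f n x v = ∑ l, (x - v l) := by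
  refine sum_congr rfl fun l _ => ?_
  rw [sum_eq_single_of_mem l (mem_univ l)]
  · simp [sub_nonneg.2 (hle l)]
  · intro k _ hkl
    rcases lt_or_gt_of_ne hkl with hlt | hgt
    · simp [not_le.2 hlt]
    · simp [hgt.le, sub_nonpos.2 (hwindow l k hgt)]

theorem sum_sub_eq_of_mem_Lambda {v : Fin n → ℝ} {w : ℝ} (hv : v ∈ Lambda n w) :
    ∑ l, (x - v l) = n * x - w := by
  simp [sum_sub_distrib, hv.2]

theorem sum_alternating (c : ℝ) :
    ∑ i, alternating n x c i = (n / 2 : ℕ) * x + (n - n / 2 : ℕ) * c := by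
  simp only [alternating]
  rw [Fin.sum_univ_eq_sum_range (fun i => if Odd i then x else c), sum_range_ite_odd,
    nsmul_eq_mul, nsmul_eq_mul]

theorem alternating_nonneg {c : ℝ} (hx : 0 ≤ x) (hc : 0 ≤ c) (i : Fin n) :
    0 ≤ alternating n x c i := by
  unfold alternating; split_ifs <;> assumption

theorem alternating_le {c : ℝ} (hcx : c ≤ x) (i : Fin n) : alternating n x c i ≤ x := by
  unfold alternating; split_ifs <;> linarith

theorem le_sum_Icc_alternating {c : ℝ} (hx : 0 ≤ x) (hc : 0 ≤ c) {l k : Fin n} (hlk : l < k) :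
    x ≤ ∑ i ∈ Icc l k, alternating n x c i := by
  obtain ⟨j, hj, hjodd⟩ : ∃ j ∈ Icc l k, Odd (j : ℕ) := by
    by_cases hl : Odd (l : ℕ)
    · exact ⟨l, mem_Icc.2 ⟨le_rfl, hlk.le⟩, hl⟩
    · refine ⟨⟨l + 1, by omega⟩, mem_Icc.2 ⟨Fin.le_def.2 (by simp), Fin.le_def.2 (by simp; omega)⟩,
        by simpa [Nat.odd_add_one] using hl⟩
  calc x = alternating n x c j := by simp [alternating, hjodd]
    _ ≤ _ := single_le_sum (fun i _ => alternating_nonneg hx hc i) hj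

end

/-- If `⌊w/x⌋ ≥ ⌊n/2⌋` and `w ≤ n·x`, the minimum of `f` over `Λ(w)` equals `n·x − w`. -/
theorem statement8 (n : ℕ) (hn : 1 ≤ n) (x w : ℝ) (hx : 0 < x) (hw : 0 ≤ w)
    (hfloor : n / 2 ≤ ⌊w / x⌋₊) (hwn : w ≤ (n : ℝ) * x) :
    (∀ v ∈ Lambda n w, (n : ℝ) * x - w ≤ f n x v) ∧
    (∃ v ∈ Lambda n w, f n x v = (n : ℝ) * x - w) := by
  refine ⟨fun v hv => sum_sub_eq_of_mem_Lambda hv ▸ sum_sub_le_f v, ?_⟩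
  set a := n / 2
  set b := n - n / 2
  have hb : (0 : ℝ) < b := by simp only [b]; norm_cast; omega
  have hab : (a : ℝ) + b = n := by simp only [a, b]; norm_cast; omega
  have haw : (a : ℝ) * x ≤ w :=
    (le_div_iff₀ hx).1 ((Nat.le_floor_iff (div_nonneg hw hx.le)).1 hfloor)
  set c := (w - a * x) / b
  have hc : 0 ≤ c := div_nonneg (by linarith) hb.le
  have hcx : c ≤ x := (div_le_iff₀ hb).2 (by rw [← hab, add_mul] at hwn; linarith)
  have hsum : ∑ i, alternating n x c i = w := by
    rw [sum_alternating]
    change (a : ℝ) * x + b * ((w - a * x) / b) = w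
    rw [mul_div_cancel₀ _ hb.ne']
    ring
  have hmem : alternating n x c ∈ Lambda n w := ⟨alternating_nonneg hx.le hc, hsum⟩
  refine ⟨alternating n x c, hmem, ?_⟩
  rw [f_eq_sum_sub _ (alternating_le hcx) (fun l k => le_sum_Icc_alternating hx.le hc),
    sum_sub_eq_of_mem_Lambda hmem]
end
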